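/- arXiv:1704.00164 — 2 statements merged into one kernel-verified Lean document; each statement's English description precedes it below -/
import Mathlib

section
/- The constant term of the n-th power of the Laurent polynomial W = X_1 + X_2 + X_3 + X_4 + 1/(X_1 X_2 X_3 X_4) equals (5m)!/(m!)^5 if n = 5m and equals 0 if n is not divisible by 5. -/
open Finset

/-- The Laurent polynomial `W = X₁ + X₂ + X₃ + X₄ + 1/(X₁X₂X₃X₄)`, realised as an
element of the group algebra of `Fin 4 → ℤ` (multivariate Laurent polynomials). -/
noncomputable def Wquintic : AddMonoidAlgebra ℚ (Fin 4 → ℤ) :=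
  (∑ i : Fin 4, AddMonoidAlgebra.single (Pi.single i (1 : ℤ)) (1 : ℚ)) +
    AddMonoidAlgebra.single (fun _ => (-1 : ℤ)) (1 : ℚ)

/-!
By the multinomial theorem, `Wⁿ = ∑ multinomial(k) X^(∑ kᵢ eᵢ)` over `k : Fin 5 → ℕ` with
`∑ kᵢ = n`, where `e₀, …, e₃` are the unit vectors and `e₄ = -(e₀ + ⋯ + e₃)`. The exponent
`∑ kᵢ eᵢ` vanishes exactly when all `kᵢ` are equal, so the constant term is the multinomial
coefficient of the constant tuple `(m, …, m)` if `n = 5m`, and an empty sum otherwise.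
-/

namespace AddMonoidAlgebra

variable {ι R G : Type*} [DecidableEq ι] [CommSemiring R] [AddCommMonoid G]

theorem sum_single_one_pow (s : Finset ι) (e : ι → G) (n : ℕ) :
    (∑ i ∈ s, single (e i) (1 : R)) ^ n =
      ∑ k ∈ s.piAntidiag n, single (∑ i ∈ s, k i • e i) (Nat.multinomial s k : R) := by
  rw [sum_pow_eq_sum_piAntidiag]
  refine sum_congr rfl fun k _ => ?_
  simp_rw [single_pow, one_pow, prod_single, prod_const_one]
  rw [← nsmul_eq_mul, smul_single, nsmul_eq_mul, mul_one]

theorem coeff_sum_single_one_pow [DecidableEq G] (s : Finset ι) (e : ι → G) (n : ℕ) (g : G) :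
    ((∑ i ∈ s, single (e i) (1 : R)) ^ n).coeff g =
      ∑ k ∈ s.piAntidiag n with ∑ i ∈ s, k i • e i = g, (Nat.multinomial s k : R) := by
  rw [sum_single_one_pow, coeff_sum, Finsupp.finsetSum_apply, sum_filter]
  exact sum_congr rfl fun k _ => Finsupp.single_apply

end AddMonoidAlgebra

theorem Nat.multinomial_univ_const {K : Type*} [Field K] [CharZero K] (d m : ℕ) :
    (Nat.multinomial univ (fun _ : Fin d => m) : K) =
      ((d * m).factorial : K) / (m.factorial : K) ^ d := by
  have h := Nat.multinomial_spec univ (fun _ : Fin d => m)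
  simp only [prod_const, Finset.card_univ, Fintype.card_fin, sum_const, smul_eq_mul] at h
  rw [eq_div_iff (pow_ne_zero _ (Nat.cast_ne_zero.2 m.factorial_ne_zero)), ← h]
  push_cast
  ring

def wExponent : Fin 5 → Fin 4 → ℤ :=
  ![Pi.single 0 1, Pi.single 1 1, Pi.single 2 1, Pi.single 3 1, fun _ => -1]

theorem Wquintic_eq_sum_single :
    Wquintic = ∑ j, AddMonoidAlgebra.single (wExponent j) (1 : ℚ) := by
  simp [Wquintic, Fin.sum_univ_five, Fin.sum_univ_four, wExponent]

theorem sum_smul_wExponent (k : Fin 5 → ℕ) :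
    ∑ i, k i • wExponent i = fun j => (k j.castSucc : ℤ) - k 4 := by
  ext j
  fin_cases j <;> simp [Fin.sum_univ_five, wExponent, sub_eq_add_neg]

theorem sum_smul_wExponent_eq_zero_iff (k : Fin 5 → ℕ) :
    ∑ i, k i • wExponent i = 0 ↔ k = fun _ => k 4 := by
  simp only [sum_smul_wExponent, funext_iff, Pi.zero_apply, sub_eq_zero, Nat.cast_inj,
    Fin.forall_fin_succ' (P := fun i => k i = k 4)]
  exact (and_iff_left rfl).symm

theorem filter_piAntidiag_sum_smul_wExponent_eq_zero (n : ℕ) :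
    {k ∈ piAntidiag (univ : Finset (Fin 5)) n | ∑ i, k i • wExponent i = 0} =
      if 5 ∣ n then {fun _ => n / 5} else ∅ := by
  ext k
  simp only [mem_filter, mem_piAntidiag, mem_univ, implies_true, and_true,
    sum_smul_wExponent_eq_zero_iff]
  constructor
  · rintro ⟨hsum, hk⟩
    rw [hk, sum_const, card_univ, Fintype.card_fin, smul_eq_mul] at hsum
    rw [if_pos ⟨_, hsum.symm⟩, mem_singleton, hk, ← hsum, Nat.mul_div_cancel_left _ (by norm_num)]
  · split_ifs with h
    · rw [mem_singleton]
      rintro rfl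
      simp [Nat.mul_div_cancel' h]
    · simp

theorem coeff_zero_Wquintic_pow (n : ℕ) :
    (Wquintic ^ n).coeff 0 =
      if 5 ∣ n then (Nat.multinomial univ (fun _ : Fin 5 => n / 5) : ℚ) else 0 := by
  rw [Wquintic_eq_sum_single, AddMonoidAlgebra.coeff_sum_single_one_pow,
    filter_piAntidiag_sum_smul_wExponent_eq_zero]
  split_ifs <;> simp

/-- The constant term of `Wⁿ` equals `(5m)!/(m!)^5` when `n = 5m`, and `0` when
`5 ∤ n`. -/
theorem constant_term_W_pow :
    (∀ m : ℕ, (Wquintic ^ (5 * m)).coeff 0 = ((5 * m).factorial : ℚ) / ((m.factorial : ℚ)) ^ 5) ∧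
    (∀ n : ℕ, ¬ (5 ∣ n) → (Wquintic ^ n).coeff 0 = 0) := by
  refine ⟨fun m => ?_, fun n hn => ?_⟩
  · rw [coeff_zero_Wquintic_pow, if_pos (dvd_mul_right 5 m),
      Nat.mul_div_cancel_left m (by norm_num), Nat.multinomial_univ_const]
  · rw [coeff_zero_Wquintic_pow, if_neg hn]
end

section
/- For all natural numbers n ≥ 1, the formal power series expansion of (1 - n^2 t)^{1/n} in t has integer coefficients; that is, the series f(t) = ∑_{k≥0} c_k t^k ∈ ℚ[[t]] defined by f(t)^n = 1 - n^2 t and c_0 = 1 has all c_k ∈ ℤ. -/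
open PowerSeries

private lemma aux_pow_mem (g : PowerSeries ℚ) (m : ℕ)
    (H : ∀ a ≤ m, PowerSeries.coeff a g ∈ (Int.castRingHom ℚ).range) :
    ∀ (j : ℕ) (b : ℕ), b ≤ m →
      PowerSeries.coeff b (g ^ j) ∈ (Int.castRingHom ℚ).range := by
  intro j
  induction j with
  | zero =>
    intro b _
    rw [pow_zero, PowerSeries.coeff_one]
    split
    · exact one_mem _
    · exact zero_mem _
  | succ j ih =>
    intro b hb
    rw [pow_succ, PowerSeries.coeff_mul]
    refine sum_mem fun p hp => ?_
    rw [Finset.HasAntidiagonal.mem_antidiagonal] at hp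
    exact mul_mem (ih p.1 (by omega)) (H p.2 (by omega))

private lemma aux_pow2_mem (g : PowerSeries ℚ)
    (hg0 : PowerSeries.constantCoeff g = 0) (k : ℕ)
    (H : ∀ j < k, PowerSeries.coeff j g ∈ (Int.castRingHom ℚ).range) (i : ℕ) :
    PowerSeries.coeff k (g ^ (i + 2)) ∈ (Int.castRingHom ℚ).range := by
  rw [pow_succ, PowerSeries.coeff_mul]
  refine sum_mem fun p hp => ?_
  rw [Finset.HasAntidiagonal.mem_antidiagonal] at hp
  by_cases h2 : p.2 = 0
  · rw [h2, PowerSeries.coeff_zero_eq_constantCoeff, hg0, mul_zero]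
    exact zero_mem _
  by_cases h1 : p.1 = 0
  · rw [h1, PowerSeries.coeff_zero_eq_constantCoeff, map_pow, hg0,
      zero_pow (by omega), zero_mul]
    exact zero_mem _
  exact mul_mem
    (aux_pow_mem g p.1 (fun a ha => H a (by omega)) (i + 1) p.1 le_rfl)
    (H p.2 (by omega))

/-- Euler's observation: the power series `f` with constant term `1` satisfying
`f(t)^n = 1 - n² t` has integer coefficients. -/
theorem nth_root_one_sub_nsq_integral
    (n : ℕ) (hn : 1 ≤ n) (f : PowerSeries ℚ)
    (h0 : PowerSeries.constantCoeff f = 1)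
    (hf : f ^ n = 1 - ((n : ℚ)) ^ 2 • PowerSeries.X) :
    ∀ k : ℕ, ∃ z : ℤ, PowerSeries.coeff k f = (z : ℚ) := by
  obtain ⟨m, rfl⟩ : ∃ m, n = m + 1 := ⟨n - 1, by omega⟩
  obtain ⟨N, hN⟩ : ∃ N : ℚ, N = ((m + 1 : ℕ) : ℚ) := ⟨_, rfl⟩
  rw [← hN] at hf
  have hNne : N ≠ 0 := by rw [hN]; positivity
  obtain ⟨g, hg⟩ : ∃ g : PowerSeries ℚ,
      g = PowerSeries.C N⁻¹ * (1 - f) := ⟨_, rfl⟩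
  have hfg : f = 1 - PowerSeries.C N * g := by
    rw [hg, ← mul_assoc, ← map_mul, mul_inv_cancel₀ hNne, map_one, one_mul]
    ring
  have hg0 : PowerSeries.constantCoeff g = 0 := by
    rw [hg]
    simp [h0]
  -- binomial expansion
  have expand : f ^ (m + 1) =
      ∑ i ∈ Finset.range (m + 2),
        (-(PowerSeries.C N * g)) ^ i * ((m + 1).choose i : PowerSeries ℚ) := by
    rw [hfg, show (1 : PowerSeries ℚ) - PowerSeries.C N * g
        = -(PowerSeries.C N * g) + 1 by ring, add_pow]
    simp
  have hcastc : ∀ i : ℕ, ((m + 1).choose i : PowerSeries ℚ)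
      = PowerSeries.C (((m + 1).choose i : ℕ) : ℚ) := fun i =>
    (map_natCast (PowerSeries.C (R := ℚ)) _).symm
  have hsum := hf
  rw [expand, PowerSeries.smul_eq_C_mul, map_pow,
    Finset.sum_range_succ', Finset.sum_range_succ'] at hsum
  have hch1 : ((m + 1).choose (0 + 1) : PowerSeries ℚ) = PowerSeries.C N := by
    rw [Nat.choose_one_right, hN]
    exact (map_natCast (PowerSeries.C (R := ℚ)) _).symm
  simp only [show ∀ i : ℕ, i + 1 + 1 = i + 2 from fun i => rfl, hch1,
    Nat.choose_zero_right, Nat.cast_one, pow_zero, pow_one, one_mul, mul_one] at hsum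
  have key : g = PowerSeries.X + ∑ i ∈ Finset.range m,
      ((-1 : ℚ) ^ i * N ^ i * (((m + 1).choose (i + 2) : ℕ) : ℚ)) • g ^ (i + 2) := by
    have hCne : PowerSeries.C N ≠ 0 := fun h => hNne (by
      have := congrArg (PowerSeries.constantCoeff (R := ℚ)) h
      simpa using this)
    apply mul_left_cancel₀ (pow_ne_zero 2 hCne)
    rw [mul_add, Finset.mul_sum]
    have hterm : ∀ i ∈ Finset.range m,
        PowerSeries.C N ^ 2 *
          (((-1 : ℚ) ^ i * N ^ i * (((m + 1).choose (i + 2) : ℕ) : ℚ)) • g ^ (i + 2))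
        = (-(PowerSeries.C N * g)) ^ (i + 2)
            * ((m + 1).choose (i + 2) : PowerSeries ℚ) := by
      intro i _
      rw [PowerSeries.smul_eq_C_mul, hcastc, map_mul, map_mul, map_pow, map_pow,
        map_neg, map_one]
      ring
    rw [Finset.sum_congr rfl hterm]
    linear_combination -hsum
  -- integrality of coefficients of g, by strong induction
  have hgint : ∀ k, PowerSeries.coeff k g ∈ (Int.castRingHom ℚ).range := by
    intro k
    induction k using Nat.strong_induction_on with
    | _ k ih =>
      rw [key, map_add, map_sum]
      refine add_mem ?_ (sum_mem fun i _ => ?_)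
      · rw [PowerSeries.coeff_X]
        split
        · exact one_mem _
        · exact zero_mem _
      · rw [PowerSeries.coeff_smul]
        refine mul_mem ⟨(-1) ^ i * (m + 1 : ℤ) ^ i * ((m + 1).choose (i + 2) : ℤ), by
          simp only [Int.coe_castRingHom]
          push_cast [hN]
          ring⟩ (aux_pow2_mem g hg0 k ih i)
  intro k
  have hmem : PowerSeries.coeff k f ∈ (Int.castRingHom ℚ).range := by
    rw [hfg, map_sub, PowerSeries.coeff_C_mul]
    refine sub_mem ?_ (mul_mem ⟨(m + 1 : ℤ), by
      simp only [Int.coe_castRingHom]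
      push_cast [hN]
      ring⟩ (hgint k))
    rw [PowerSeries.coeff_one]
    split
    · exact one_mem _
    · exact zero_mem _
  obtain ⟨z, hz⟩ := hmem
  exact ⟨z, hz.symm⟩
end
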